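/- Committal rate of softmax PG is at least 1: fix a ∈ [K] and θ̃_1 ∈ ℝ^K, and define the fixed-sampling softmax PG sequence θ̃_{t+1} := θ̃_t + η_t·g_a(θ̃_t) with adaptive learning rate η_t := π_{θ̃_t}(a)/(5·r(a)). Then π_{θ̃_t}(a) is non-decreasing in t, and for all t ≥ 1, t·(1 − π_{θ̃_t}(a)) ≤ 10/π_{θ̃_1}(a)². -/

import Mathlib

open Finset Real Filter

/-- Softmax policy: `π_θ(a) = exp(θ(a)) / Σ_{a'} exp(θ(a'))`. -/
noncomputable def softmax (θ : Fin K → ℝ) (a : Fin K) : ℝ :=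
  Real.exp (θ a) / ∑ a', Real.exp (θ a')

/-- On-policy IS stochastic softmax policy gradient for sampled action `a`:
`g_a(θ)(i) = 1{i = a}·r(a) − π_θ(i)·r(a)`. -/
noncomputable def stochPG {K : ℕ} (r : Fin K → ℝ) (a : Fin K) (θ : Fin K → ℝ)
    (i : Fin K) : ℝ :=
  (if i = a then r a else 0) - softmax θ i * r a

/-! With `r a ≠ 0` the reward cancels against the step size, so one step raises the logit of
`a` by `π(a)(1 - π(a))/5` and lowers every other logit. Since `e^α ≥ 1 + α`, the gap
`δ = 1 - π(a)` then satisfies `δ' ≤ δ / (1 + π(a)² δ / 5)`. In particular `π(a)` increases, so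
`π_t(a) ≥ q := π_0(a)` and `1/δ` grows by at least `q²/5` per step: `δ_t (1 + t q²/5) ≤ 1`. -/

section

variable {K : ℕ}

lemma sum_exp_pos (θ : Fin K → ℝ) (a : Fin K) : 0 < ∑ i, exp (θ i) :=
  sum_pos (fun i _ => exp_pos (θ i)) ⟨a, mem_univ a⟩

lemma softmax_pos (θ : Fin K → ℝ) (a : Fin K) : 0 < softmax θ a :=
  div_pos (exp_pos _) (sum_exp_pos θ a)

lemma softmax_le_one (θ : Fin K → ℝ) (a : Fin K) : softmax θ a ≤ 1 :=
  (div_le_one (sum_exp_pos θ a)).2 <|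
    single_le_sum (fun i _ => (exp_pos (θ i)).le) (mem_univ a)

lemma softmax_eq_div_add_sum_erase (θ : Fin K → ℝ) (a : Fin K) :
    softmax θ a = exp (θ a) / (exp (θ a) + ∑ i ∈ univ.erase a, exp (θ i)) := by
  rw [softmax, ← add_sum_erase _ _ (mem_univ a)]

lemma one_sub_softmax_eq_div_add_sum_erase (θ : Fin K → ℝ) (a : Fin K) :
    1 - softmax θ a =
      (∑ i ∈ univ.erase a, exp (θ i)) / (exp (θ a) + ∑ i ∈ univ.erase a, exp (θ i)) := by
  have hpos : 0 < exp (θ a) + ∑ i ∈ univ.erase a, exp (θ i) :=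
    add_pos_of_pos_of_nonneg (exp_pos _) (sum_nonneg fun i _ => (exp_pos _).le)
  rw [softmax_eq_div_add_sum_erase, eq_div_iff hpos.ne', sub_mul, div_mul_cancel₀ _ hpos.ne']
  ring

lemma one_sub_softmax_le_of_shift {θ θ' : Fin K → ℝ} {a : Fin K} {α : ℝ}
    (hα : 0 ≤ α) (ha : θ' a = θ a + α) (hle : ∀ i ≠ a, θ' i ≤ θ i) :
    1 - softmax θ' a ≤ (1 - softmax θ a) / (1 + softmax θ a * α) := by
  rw [one_sub_softmax_eq_div_add_sum_erase θ', one_sub_softmax_eq_div_add_sum_erase θ,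
    softmax_eq_div_add_sum_erase θ, ha, exp_add]
  set A := exp (θ a)
  set B := ∑ i ∈ univ.erase a, exp (θ i)
  set B' := ∑ i ∈ univ.erase a, exp (θ' i)
  have hA : 0 < A := exp_pos _
  have hB : 0 ≤ B := sum_nonneg fun i _ => (exp_pos _).le
  have hB' : 0 ≤ B' := sum_nonneg fun i _ => (exp_pos _).le
  have hB'B : B' ≤ B := sum_le_sum fun i hi => exp_le_exp.2 (hle i (ne_of_mem_erase hi))
  have hexp : 1 + α ≤ exp α := by linarith [add_one_le_exp α]
  have hrhs : B / (A + B) / (1 + A / (A + B) * α) = B / (A + B + A * α) := by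
    field_simp
  rw [hrhs, div_le_div_iff₀ (by positivity) (by positivity)]
  -- cross-multiplied, this is `B' · A (1 + α) ≤ B · A e^α`
  nlinarith [mul_le_mul hB'B (mul_le_mul_of_nonneg_left hexp hA.le) (by positivity) hB]

lemma div_mul_stochPG {r : Fin K → ℝ} {a : Fin K} (hra : r a ≠ 0)
    (θ : Fin K → ℝ) (i : Fin K) :
    softmax θ a / (5 * r a) * stochPG r a θ i =
      softmax θ a / 5 * ((if i = a then 1 else 0) - softmax θ i) := by
  unfold stochPG
  split_ifs <;> field_simp
  ring

lemma one_sub_softmax_pg_step_le {r : Fin K → ℝ} {a : Fin K} (hra : r a ≠ 0)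
    (θ : Fin K → ℝ) :
    1 - softmax (fun i => θ i + softmax θ a / (5 * r a) * stochPG r a θ i) a ≤
      (1 - softmax θ a) / (1 + softmax θ a ^ 2 * (1 - softmax θ a) / 5) := by
  have hp := softmax_pos θ a
  have hp1 := softmax_le_one θ a
  have hshift := one_sub_softmax_le_of_shift
    (θ' := fun i => θ i + softmax θ a / (5 * r a) * stochPG r a θ i)
    (α := softmax θ a * (1 - softmax θ a) / 5) (by positivity)
    (by rw [div_mul_stochPG hra, if_pos rfl]; ring) fun i hi => by
      rw [div_mul_stochPG hra, if_neg hi]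
      nlinarith [softmax_pos θ i]
  convert hshift using 3
  ring

end

lemma mul_one_add_nat_mul_le_one {δ : ℕ → ℝ} {c : ℝ} (hc : 0 ≤ c) (hδ : ∀ t, 0 ≤ δ t)
    (h0 : δ 0 ≤ 1) (hstep : ∀ t, δ (t + 1) ≤ δ t / (1 + c * δ t)) (t : ℕ) :
    δ t * (1 + t * c) ≤ 1 := by
  induction t with
  | zero => simpa using h0
  | succ t ih =>
    have hpos : 0 < 1 + c * δ t := by nlinarith [hδ t]
    calc δ (t + 1) * (1 + (t + 1 : ℕ) * c)
        ≤ δ t / (1 + c * δ t) * (1 + (t + 1 : ℕ) * c) := by gcongr; exact hstep t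
      _ ≤ 1 := by
        rw [div_mul_eq_mul_div, div_le_one hpos]
        push_cast
        linarith

theorem committal_rate_softmax_pg_ge_one_general
    {K : ℕ} (r : Fin K → ℝ)
    (hr : ∀ a, 0 < r a ∧ r a ≤ 1)
    (a : Fin K) (θ : ℕ → Fin K → ℝ)
    (hupd : ∀ t, θ (t + 1) = fun i =>
      θ t i + (softmax (θ t) a / (5 * r a)) * stochPG r a (θ t) i) :
    (∀ t, softmax (θ t) a ≤ softmax (θ (t + 1)) a) ∧
    ∀ t : ℕ, ((t : ℝ) + 1) * (1 - softmax (θ t) a) ≤ 10 / softmax (θ 0) a ^ 2 := by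
  set p : ℕ → ℝ := fun t => softmax (θ t) a
  have hp : ∀ t, 0 < p t := fun t => softmax_pos (θ t) a
  have hδ : ∀ t, 0 ≤ 1 - p t := fun t => sub_nonneg.2 (softmax_le_one (θ t) a)
  have hstep : ∀ t, 1 - p (t + 1) ≤ (1 - p t) / (1 + p t ^ 2 * (1 - p t) / 5) := fun t => by
    simpa only [p, hupd t] using one_sub_softmax_pg_step_le (hr a).1.ne' (θ t)
  have hmono : ∀ t, p t ≤ p (t + 1) := fun t => by
    have := div_le_self (hδ t) (le_add_of_nonneg_right (by have := hδ t; positivity) :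
      1 ≤ 1 + p t ^ 2 * (1 - p t) / 5)
    linarith [hstep t]
  have hq : ∀ t, p 0 ^ 2 ≤ p t ^ 2 := fun t =>
    pow_le_pow_left₀ (hp 0).le (monotone_nat_of_le_succ hmono (Nat.zero_le t)) 2
  have hrate := mul_one_add_nat_mul_le_one (δ := fun t => 1 - p t) (c := p 0 ^ 2 / 5)
    (by positivity) hδ (by linarith [hp 0]) fun t =>
      (hstep t).trans (div_le_div_of_nonneg_left (hδ t) (by have := hδ t; positivity)
        (by have := hδ t; have := hq t; nlinarith))
  refine ⟨hmono, fun t => ?_⟩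
  show (t + 1 : ℝ) * (1 - p t) ≤ 10 / p 0 ^ 2
  have hq1 : p 0 ^ 2 ≤ 1 := pow_le_one₀ (hp 0).le (by linarith [hδ 0])
  rw [le_div_iff₀ (pow_pos (hp 0) 2)]
  nlinarith [hrate t, mul_le_mul_of_nonneg_left hq1 (hδ t)]

/-- Committal rate of softmax PG is at least 1: for the fixed-sampling sequence
`θ_{t+1} = θ_t + η_t·g_a(θ_t)` with adaptive learning rate
`η_t = π_{θ_t}(a)/(5·r(a))`, the probability `π_{θ_t}(a)` is non-decreasing and
`t·(1 − π_{θ_t}(a)) ≤ 10/π_{θ_1}(a)²` for all `t ≥ 1`.  (Here `θ 0` is the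
paper's `θ_1`, so the factor `t` becomes `t + 1`.) -/
theorem committal_rate_softmax_pg_ge_one
    {K : ℕ} (hK : 2 ≤ K) (r : Fin K → ℝ)
    (hr : ∀ a, 0 < r a ∧ r a ≤ 1)
    (a : Fin K) (θ : ℕ → Fin K → ℝ)
    (hupd : ∀ t, θ (t + 1) = fun i =>
      θ t i + (softmax (θ t) a / (5 * r a)) * stochPG r a (θ t) i) :
    (∀ t, softmax (θ t) a ≤ softmax (θ (t + 1)) a) ∧
    ∀ t : ℕ, ((t : ℝ) + 1) * (1 - softmax (θ t) a) ≤ 10 / softmax (θ 0) a ^ 2 :=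
  committal_rate_softmax_pg_ge_one_general r hr a θ hupd
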